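/- Suppose μ is a singular cardinal of countable cofinality and ⟨μ_i : i < ω⟩ is an increasing sequence of regular cardinals cofinal in μ. Then there is a strongly increasing sequence ⟨g_β : β < μ⁺⟩ of functions from ω to the ordinals such that g_β(i) < μ_i for all β < μ⁺ and all i < ω. -/

import Mathlib

open Ordinal Cardinal

/-- `f <ₙ g` : `f m < g m` for all `m ∈ ω \ n`. -/
def LtN (n : ℕ) (f g : ℕ → Ordinal) : Prop := ∀ m : ℕ, n ≤ m → f m < g m

/-- `f ≤ₙ g` : `f m ≤ g m` for all `m ∈ ω \ n`. -/
def LeN (n : ℕ) (f g : ℕ → Ordinal) : Prop := ∀ m : ℕ, n ≤ m → f m ≤ g m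

/-- `f <* g` : `f m < g m` for all but finitely many `m`. -/
def LtStar (f g : ℕ → Ordinal) : Prop := ∃ n : ℕ, LtN n f g

/-- `f =* g` : `f m = g m` for all but finitely many `m`. -/
def EqStar (f g : ℕ → Ordinal) : Prop := ∃ n : ℕ, ∀ m : ℕ, n ≤ m → f m = g m

/-- `C` is a club (closed unbounded) subset of the (limit) ordinal `β`:
`C ⊆ β`, `C` is closed in `β`, and `C` is unbounded in `β`. -/
def IsClubIn (C : Set Ordinal) (β : Ordinal) : Prop :=
  C ⊆ Set.Iio β ∧
  (∀ α < β, α ≠ 0 → (∀ δ < α, ∃ x ∈ C, δ < x ∧ x < α) → α ∈ C) ∧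
  (∀ δ < β, ∃ x ∈ C, δ < x)

/-- `S` is a stationary subset of `lam`: it meets every club subset of `lam`. -/
def StationaryIn (S : Set Ordinal) (lam : Ordinal) : Prop :=
  ∀ C : Set Ordinal, IsClubIn C lam → (S ∩ C).Nonempty

/-- `⟨f α : α < γ⟩` is a strongly increasing sequence of functions from `ω` to the
ordinals. -/
def StronglyIncreasingOn (f : Ordinal → ℕ → Ordinal) (γ : Ordinal) : Prop :=
  (∀ α β : Ordinal, α < β → β < γ → LtStar (f α) (f β)) ∧
  (∀ β < γ, Order.IsSuccLimit β →
    ∃ C : Set Ordinal, ∃ n : ℕ, IsClubIn C β ∧ ∀ α ∈ C, LtN n (f α) (f β))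

/-- `⟨f α : α < γ⟩` is a very strongly increasing sequence: it is strongly increasing,
the witnessing `n_β` can be taken to be `0` at limits of uncountable cofinality, and
condition (2) of Definition 1.2 holds at ordinals of the form `β + ω`. -/
def VeryStronglyIncreasingOn (f : Ordinal → ℕ → Ordinal) (γ : Ordinal) : Prop :=
  StronglyIncreasingOn f γ ∧
  (∀ β < γ, Order.IsSuccLimit β → Cardinal.aleph0 < β.cof →
    ∃ C : Set Ordinal, IsClubIn C β ∧ ∀ α ∈ C, LtN 0 (f α) (f β)) ∧
  (∀ β : Ordinal, β + Ordinal.omega0 < γ → ∀ n : ℕ,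
    ∃ α : Ordinal, β + 1 ≤ α ∧ α < β + Ordinal.omega0 ∧
      LeN n (f α) (f (β + Ordinal.omega0)) ∧ ∀ m : ℕ, m < n → f α m = 0)

/-- `g` is an exact upper bound for `⟨f α : α < γ⟩`. -/
def IsEUB (f : Ordinal → ℕ → Ordinal) (γ : Ordinal) (g : ℕ → Ordinal) : Prop :=
  (∀ α < γ, LtStar (f α) g) ∧
  (∀ h : ℕ → Ordinal, LtStar h g → ∃ α < γ, LtStar h (f α))

/-- `β` is good for `⟨f α : α < γ⟩` (only the restriction `f ↾ β` matters). -/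
def IsGoodFor (f : Ordinal → ℕ → Ordinal) (β : Ordinal) : Prop :=
  Cardinal.aleph0 < β.cof ∧
  ∃ h : ℕ → Ordinal, IsEUB f β h ∧ ∃ n : ℕ, ∀ i : ℕ, n ≤ i → (h i).cof = β.cof

/-- The Chang's Conjecture principle `(κ, lam) ↠ (δ, γ)`: every structure over a
countable first-order language with universe of cardinality `κ`, together with a subset
`B` of the universe of cardinality `lam`, admits an elementary substructure `X` of
cardinality `δ` with `|X ∩ B| = γ`. -/
def ChangsConjecture (κ lam δ γ : Cardinal) : Prop :=
  ∀ (L : FirstOrder.Language.{0, 0}) (M : Type) (_ : L.Structure M),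
    L.card ≤ Cardinal.aleph0 → Cardinal.mk M = κ →
    ∀ B : Set M, Cardinal.mk B = lam →
      ∃ X : L.ElementarySubstructure M,
        Cardinal.mk X = δ ∧ Cardinal.mk ((X : Set M) ∩ B : Set M) = γ

/-!
Define `g β i` by recursion on `β`: if `cof β < μ_i`, it is the supremum of `g α i + 1` over the
closure `C_β` in `β` of a cofinal subset of size `cof β`, otherwise `0`. The set `C_β` is a club
when `β` is a limit, contains `γ` when `β = γ + 1` (so successors need no separate clause), and
has cardinality `< μ_i`, so regularity of `μ_i` keeps `g β i < μ_i`. Moreover `g α <ₙ g β` for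
`α ∈ C_β` as soon as `cof β < μ_n`. For `β < μ⁺` such an `n` exists because `cof β ≤ μ` and `μ`
is singular; then `g α <* g β` for all `α < β` follows by induction, through a point of `C_β`
above `α`.
-/

universe u

section ClosureBelow

variable {S : Set Ordinal.{u}} {β : Ordinal.{u}}

/-- `S` together with its limit points below `β` (and `0`). -/
def closureBelow (S : Set Ordinal.{u}) (β : Ordinal.{u}) : Set Ordinal.{u} :=
  {α | α < β ∧ ∀ δ < α, ∃ x ∈ S, δ < x ∧ x ≤ α}

theorem closureBelow_subset_Iio : closureBelow S β ⊆ Set.Iio β := fun _ hα => hα.1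

instance small_closureBelow : Small.{u} (closureBelow S β) :=
  small_subset closureBelow_subset_Iio

theorem subset_closureBelow (hS : S ⊆ Set.Iio β) : S ⊆ closureBelow S β :=
  fun x hx => ⟨hS hx, fun _ hδ => ⟨x, hx, hδ, le_rfl⟩⟩

theorem isClubIn_closureBelow (hS : S ⊆ Set.Iio β) (hunb : ∀ δ < β, ∃ x ∈ S, δ < x) :
    IsClubIn (closureBelow S β) β := by
  refine ⟨closureBelow_subset_Iio, fun α hα _ hacc => ⟨hα, fun δ hδ => ?_⟩, fun δ hδ => ?_⟩
  · obtain ⟨y, ⟨-, hy⟩, hδy, hyα⟩ := hacc δ hδ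
    obtain ⟨x, hxS, hδx, hxy⟩ := hy δ hδy
    exact ⟨x, hxS, hδx, hxy.trans hyα.le⟩
  · obtain ⟨x, hxS, hδx⟩ := hunb δ hδ
    exact ⟨x, subset_closureBelow hS hxS, hδx⟩

/-- The new points of the closure inject into `S` by sending `α` to the least element of `S`
above it. -/
theorem mk_closureBelow_diff_le (hcof : ∀ α < β, ∃ x ∈ S, α ≤ x) :
    #(closureBelow S β \ S : Set Ordinal) ≤ #S := by
  have hne : ∀ α : (closureBelow S β \ S : Set Ordinal), {x | x ∈ S ∧ α.1 < x}.Nonempty := by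
    rintro ⟨α, ⟨hαβ, -⟩, hαS⟩
    obtain ⟨x, hxS, hαx⟩ := hcof α hαβ
    exact ⟨x, hxS, hαx.lt_of_ne (by rintro rfl; exact hαS hxS)⟩
  let next : (closureBelow S β \ S : Set Ordinal) → S := fun α =>
    ⟨sInf {x | x ∈ S ∧ α.1 < x}, (csInf_mem (hne α)).1⟩
  have hnext : StrictMono next := by
    intro α α' hαα'
    obtain ⟨⟨-, hα'⟩, hα'S⟩ := α'.2
    obtain ⟨x, hxS, hαx, hxα'⟩ := hα' α hαα'
    have hxα' : x < α' := hxα'.lt_of_ne (by rintro rfl; exact hα'S hxS)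
    calc (next α : Ordinal) ≤ x := csInf_le (OrderBot.bddBelow _) ⟨hxS, hαx⟩
      _ < α' := hxα'
      _ ≤ next α' := le_csInf (hne α') fun _ hy => hy.2.le
  exact mk_le_of_injective hnext.injective

theorem mk_closureBelow_le (hcof : ∀ α < β, ∃ x ∈ S, α ≤ x) :
    #(closureBelow S β) ≤ #S + #S :=
  calc #(closureBelow S β) ≤ #(S ∪ (closureBelow S β \ S) : Set Ordinal) :=
        mk_le_mk_of_subset fun _ hα => or_iff_not_imp_left.2 fun hαS => ⟨hα, hαS⟩
    _ ≤ #S + #S := (mk_union_le _ _).trans (add_le_add le_rfl (mk_closureBelow_diff_le hcof))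

end ClosureBelow

section ClubOf

variable {β : Ordinal.{u}}

theorem exists_cofinalSet (β : Ordinal.{u}) : ∃ S : Set Ordinal.{u}, S ⊆ Set.Iio β ∧
    (∀ α < β, ∃ x ∈ S, α ≤ x) ∧ #S = Cardinal.lift.{u + 1} β.cof := by
  obtain ⟨s, hs, hcard⟩ := Order.exists_cof_eq (Set.Iio β)
  refine ⟨Subtype.val '' s, by simp, fun α hα => ?_, ?_⟩
  · obtain ⟨x, hxs, hαx⟩ := hs ⟨α, hα⟩
    exact ⟨x, Set.mem_image_of_mem _ hxs, hαx⟩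
  · rw [mk_image_eq Subtype.val_injective, hcard, cof_Iio, lift_cof]

noncomputable def cofinalSet (β : Ordinal.{u}) : Set Ordinal.{u} :=
  (exists_cofinalSet β).choose

theorem cofinalSet_subset_Iio : cofinalSet β ⊆ Set.Iio β :=
  (exists_cofinalSet β).choose_spec.1

theorem exists_mem_cofinalSet_ge {α : Ordinal.{u}} (hα : α < β) : ∃ x ∈ cofinalSet β, α ≤ x :=
  (exists_cofinalSet β).choose_spec.2.1 α hα

theorem mk_cofinalSet : #(cofinalSet β) = Cardinal.lift.{u + 1} β.cof :=
  (exists_cofinalSet β).choose_spec.2.2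

noncomputable def clubOf (β : Ordinal.{u}) : Set Ordinal.{u} :=
  closureBelow (cofinalSet β) β

instance small_clubOf (β : Ordinal.{u}) : Small.{u} (clubOf β) := small_closureBelow

theorem exists_mem_clubOf_ge {α : Ordinal.{u}} (hα : α < β) : ∃ x ∈ clubOf β, α ≤ x :=
  let ⟨x, hx, hαx⟩ := exists_mem_cofinalSet_ge hα
  ⟨x, subset_closureBelow cofinalSet_subset_Iio hx, hαx⟩

theorem isClubIn_clubOf (hβ : Order.IsSuccLimit β) : IsClubIn (clubOf β) β :=
  isClubIn_closureBelow cofinalSet_subset_Iio fun _ hδ =>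
    let ⟨x, hx, hδx⟩ := exists_mem_cofinalSet_ge (hβ.succ_lt hδ)
    ⟨x, hx, Order.succ_le_iff.1 hδx⟩

theorem mk_clubOf_lt {c : Cardinal.{u}} (hc : ℵ₀ ≤ c) (hβc : β.cof < c) :
    #(clubOf β) < Cardinal.lift.{u + 1} c := by
  have hlt : Cardinal.lift.{u + 1} β.cof < Cardinal.lift.{u + 1} c := Cardinal.lift_lt.2 hβc
  calc #(clubOf β) ≤ #(cofinalSet β) + #(cofinalSet β) :=
        mk_closureBelow_le fun _ => exists_mem_cofinalSet_ge
    _ < Cardinal.lift.{u + 1} c := by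
        rw [mk_cofinalSet]
        exact add_lt_of_lt (by simpa using hc) hlt hlt

end ClubOf

theorem LtStar.trans {f g h : ℕ → Ordinal} (hfg : LtStar f g) (hgh : LtStar g h) :
    LtStar f h :=
  let ⟨m, hm⟩ := hfg
  let ⟨n, hn⟩ := hgh
  ⟨max m n, fun i hi => (hm i (le_of_max_le_left hi)).trans (hn i (le_of_max_le_right hi))⟩

noncomputable def clubSupSeq (μs : ℕ → Cardinal.{u}) (β : Ordinal.{u}) (i : ℕ) : Ordinal.{u} :=
  if β.cof < μs i then ⨆ α : clubOf β, clubSupSeq μs α i + 1 else 0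
termination_by β
decreasing_by exact closureBelow_subset_Iio α.2

section ClubSupSeq

variable {μs : ℕ → Cardinal.{u}}

theorem clubSupSeq_lt_of_mem_clubOf {α β : Ordinal.{u}} {i : ℕ} (hα : α ∈ clubOf β)
    (hβ : β.cof < μs i) : clubSupSeq μs α i < clubSupSeq μs β i := by
  rw [clubSupSeq.eq_1 μs β, if_pos hβ]
  exact Ordinal.lt_iSup_add_one (fun α : clubOf β => clubSupSeq μs α i) ⟨α, hα⟩

theorem clubSupSeq_lt_ord (hreg : ∀ i, (μs i).IsRegular) (β : Ordinal.{u}) (i : ℕ) :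
    clubSupSeq μs β i < (μs i).ord := by
  induction β using WellFoundedLT.induction with
  | _ β ih =>
    rw [clubSupSeq.eq_1]
    split_ifs with hβ
    · refine lift_iSup_add_one_lt_of_lt_cof ?_ fun α => ih α (closureBelow_subset_Iio α.2)
      rw [← lift_cof, (hreg i).cof_ord, Cardinal.lift_id'.{u, u + 1}]
      exact mk_clubOf_lt (hreg i).aleph0_le hβ
    · exact (isSuccLimit_ord (hreg i).aleph0_le).bot_lt

theorem ltN_clubSupSeq_of_mem_clubOf {α β : Ordinal.{u}} {n : ℕ}
    (hn : ∀ i, n ≤ i → β.cof < μs i) (hα : α ∈ clubOf β) :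
    LtN n (clubSupSeq μs α) (clubSupSeq μs β) :=
  fun i hi => clubSupSeq_lt_of_mem_clubOf hα (hn i hi)

theorem stronglyIncreasingOn_clubSupSeq {γ : Ordinal.{u}}
    (hcof : ∀ β < γ, ∃ n, ∀ i, n ≤ i → β.cof < μs i) :
    StronglyIncreasingOn (clubSupSeq μs) γ := by
  refine ⟨fun α β hαβ hβγ => ?_, fun β hβγ hβ => ?_⟩
  · induction β using WellFoundedLT.induction generalizing α with
    | _ β ih =>
      obtain ⟨n, hn⟩ := hcof β hβγ
      obtain ⟨x, hx, hαx⟩ := exists_mem_clubOf_ge hαβ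
      have hxβ : LtStar (clubSupSeq μs x) (clubSupSeq μs β) :=
        ⟨n, ltN_clubSupSeq_of_mem_clubOf hn hx⟩
      rcases hαx.eq_or_lt with rfl | hαx
      · exact hxβ
      · have hxβ' : x < β := closureBelow_subset_Iio hx
        exact (ih x hxβ' α hαx (hxβ'.trans hβγ)).trans hxβ
  · obtain ⟨n, hn⟩ := hcof β hβγ
    exact ⟨clubOf β, n, isClubIn_clubOf hβ, fun α hα => ltN_clubSupSeq_of_mem_clubOf hn hα⟩

end ClubSupSeq

theorem cof_lt_of_lt_ord_succ {μ : Cardinal.{u}} (hμ : ℵ₀ < μ) (hcof : μ.ord.cof = ℵ₀)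
    {β : Ordinal.{u}} (hβ : β < (Order.succ μ).ord) : β.cof < μ := by
  have hle : β.cof ≤ μ := (cof_le_card β).trans (Order.lt_succ_iff.1 (lt_ord.1 hβ))
  refine hle.lt_of_ne fun heq => hμ.ne' ?_
  rw [← hcof, ← heq, cof_ord_cof]

theorem statement5_general (μ : Cardinal) (hμ : Cardinal.aleph0 < μ)
    (hcof : μ.ord.cof = Cardinal.aleph0)
    (μs : ℕ → Cardinal) (hmono : StrictMono μs)
    (hreg : ∀ i : ℕ, (μs i).IsRegular)
    (hcofinal : ∀ c < μ, ∃ i : ℕ, c < μs i) :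
    ∃ g : Ordinal → ℕ → Ordinal,
      StronglyIncreasingOn g (Order.succ μ).ord ∧
      ∀ β < (Order.succ μ).ord, ∀ i : ℕ, g β i < (μs i).ord := by
  refine ⟨clubSupSeq μs, stronglyIncreasingOn_clubSupSeq fun β hβ => ?_,
    fun β _ i => clubSupSeq_lt_ord hreg β i⟩
  obtain ⟨n, hn⟩ := hcofinal _ (cof_lt_of_lt_ord_succ hμ hcof hβ)
  exact ⟨n, fun i hi => hn.trans_le (hmono.monotone hi)⟩

/-- If `μ` is a singular cardinal of countable cofinality and
`⟨μ_i : i < ω⟩` is an increasing sequence of regular cardinals cofinal in `μ`, then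
there is a strongly increasing sequence `⟨g_β : β < μ⁺⟩` of functions from `ω` to the
ordinals with `g_β(i) < μ_i` for all `β < μ⁺` and `i < ω`. -/
theorem statement5 (μ : Cardinal) (hμ : Cardinal.aleph0 < μ)
    (hcof : μ.ord.cof = Cardinal.aleph0)
    (μs : ℕ → Cardinal) (hmono : StrictMono μs)
    (hreg : ∀ i : ℕ, (μs i).IsRegular)
    (hlt : ∀ i : ℕ, μs i < μ) (hcofinal : ∀ c < μ, ∃ i : ℕ, c < μs i) :
    ∃ g : Ordinal → ℕ → Ordinal,
      StronglyIncreasingOn g (Order.succ μ).ord ∧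
      ∀ β < (Order.succ μ).ord, ∀ i : ℕ, g β i < (μs i).ord :=
  statement5_general μ hμ hcof μs hmono hreg hcofinal
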